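/- arXiv:0810.1487 — 7 statements merged into one kernel-verified Lean document; each statement's English description precedes it below -/
import Mathlib

section
/- Let C be a 2-group, i.e. a monoidal category which is a groupoid and in which every object x admits an object y with x ⊗ y ≅ 𝟙. Write A := End(𝟙) (a group, since C is a groupoid), and for an object x define l_x, r_x : A → End(x) by l_x(b) = λ_x ∘ (b ⊗ id_x) ∘ λ_x⁻¹ and r_x(a) = ρ_x ∘ (id_x ⊗ a) ∘ ρ_x⁻¹, where λ_x : 𝟙 ⊗ x ≅ x and ρ_x : x ⊗ 𝟙 ≅ x are the unitors. Then: for every object x and every a ∈ A there is a unique element τ_x(a) ∈ A with l_x(τ_x(a)) = r_x(a); the resulting maps τ_x : A → A satisfy (i) if x ≅ x' then τ_x = τ_{x'}, and (ii) τ_𝟙 = id and τ_x ∘ τ_{x'} = τ_{x ⊗ x'}. In particular each τ_x is a group automorphism of A, so x ↦ τ_x induces an action of the group π₀(C) of isomorphism classes of objects on A = π₁(C). -/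
/-!
Tensoring on the right with a tensor-invertible object `x` is an autoequivalence of `C`, so
`l_x` is a monoid isomorphism `End 𝟙 ≃* End x` and `τ_x := l_x⁻¹ ∘ r_x` is a monoid
endomorphism of `End 𝟙`. Both `l` and `r` are natural in `x`, trivial at `𝟙`, and on `x ⊗ x'`
are obtained by whiskering (`l_{x ⊗ x'} = l_x ▷ x'`, `r_{x ⊗ x'} = x ◁ r_{x'}`); the interchange
`x ◁ l_{x'} = r_x ▷ x'` then gives `τ_x ∘ τ_{x'} = τ_{x ⊗ x'}`. Bijectivity of `τ_x` follows
from this action law applied to `x` and its inverse.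
-/

open CategoryTheory MonoidalCategory

namespace CategoryTheory.MonoidalCategory

variable {C : Type*} [Category C] [MonoidalCategory C]

lemma exists_tensor_iso_unit_and_symm (hC : ∀ x : C, ∃ y : C, Nonempty (x ⊗ y ≅ 𝟙_ C))
    (x : C) : ∃ y : C, Nonempty (x ⊗ y ≅ 𝟙_ C) ∧ Nonempty (y ⊗ x ≅ 𝟙_ C) := by
  obtain ⟨y, ⟨e⟩⟩ := hC x
  obtain ⟨z, ⟨f⟩⟩ := hC y
  -- `z` and `x` are both inverse to `y`
  have g : z ≅ x :=
    (λ_ z).symm ≪≫ whiskerRightIso e.symm z ≪≫ α_ x y z ≪≫ whiskerLeftIso x f ≪≫ ρ_ x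
  exact ⟨y, ⟨e⟩, ⟨whiskerLeftIso y g.symm ≪≫ f⟩⟩

noncomputable def tensorRightEquivalence {x y : C} (e : x ⊗ y ≅ 𝟙_ C) (f : y ⊗ x ≅ 𝟙_ C) :
    C ≌ C :=
  Equivalence.mk (tensorRight x) (tensorRight y)
    ((rightUnitorNatIso C).symm ≪≫ (tensoringRight C).mapIso e.symm ≪≫ tensorRightTensor x y)
    ((tensorRightTensor y x).symm ≪≫ (tensoringRight C).mapIso f ≪≫ rightUnitorNatIso C)

/-- The map `l_x`. -/
def leftUnitEnd (x : C) : End (𝟙_ C) →* End x :=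
  (λ_ x).conj.toMonoidHom.comp ((tensorRight x).mapEnd (𝟙_ C))

/-- The map `r_x`. -/
def rightUnitEnd (x : C) : End (𝟙_ C) →* End x :=
  (ρ_ x).conj.toMonoidHom.comp ((tensorLeft x).mapEnd (𝟙_ C))

lemma leftUnitEnd_apply (x : C) (b : End (𝟙_ C)) :
    leftUnitEnd x b = (λ_ x).inv ≫ (b ▷ x) ≫ (λ_ x).hom := rfl

lemma rightUnitEnd_apply (x : C) (a : End (𝟙_ C)) :
    rightUnitEnd x a = (ρ_ x).inv ≫ (x ◁ a) ≫ (ρ_ x).hom := rfl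

lemma leftUnitEnd_bijective {x y : C} (e : x ⊗ y ≅ 𝟙_ C) (f : y ⊗ x ≅ 𝟙_ C) :
    Function.Bijective (leftUnitEnd x) :=
  ((tensorRightEquivalence e f).fullyFaithfulFunctor.mulEquivEnd (𝟙_ C)).trans
    (λ_ x).conj |>.bijective

lemma leftUnitEnd_unit (b : End (𝟙_ C)) : leftUnitEnd (𝟙_ C) b = b := by
  rw [leftUnitEnd_apply, Iso.ext (unitors_equal (C := C))]
  simp

lemma rightUnitEnd_unit (a : End (𝟙_ C)) : rightUnitEnd (𝟙_ C) a = a := by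
  rw [rightUnitEnd_apply, ← Iso.ext (unitors_equal (C := C))]
  simp

lemma leftUnitEnd_of_iso {x x' : C} (φ : x ≅ x') (b : End (𝟙_ C)) :
    leftUnitEnd x' b = φ.conj (leftUnitEnd x b) := by
  have h := whisker_exchange b φ.hom
  simp only [id_whiskerLeft, Category.assoc] at h
  rw [leftUnitEnd_apply, leftUnitEnd_apply, Iso.conj_apply, Iso.eq_inv_comp,
    ← cancel_epi (λ_ x).hom, reassoc_of% h]
  simp

lemma rightUnitEnd_of_iso {x x' : C} (φ : x ≅ x') (a : End (𝟙_ C)) :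
    rightUnitEnd x' a = φ.conj (rightUnitEnd x a) := by
  have h := (whisker_exchange φ.hom a).symm
  simp only [MonoidalCategory.whiskerRight_id, Category.assoc] at h
  rw [rightUnitEnd_apply, rightUnitEnd_apply, Iso.conj_apply, Iso.eq_inv_comp,
    ← cancel_epi (ρ_ x).hom, reassoc_of% h]
  simp

lemma leftUnitEnd_tensor (x x' : C) (b : End (𝟙_ C)) :
    leftUnitEnd (x ⊗ x') b = leftUnitEnd x b ▷ x' := by
  simp [leftUnitEnd_apply]

lemma rightUnitEnd_tensor (x x' : C) (a : End (𝟙_ C)) :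
    rightUnitEnd (x ⊗ x') a = x ◁ rightUnitEnd x' a := by
  simp [rightUnitEnd_apply]

lemma whiskerLeft_leftUnitEnd (x x' : C) (b : End (𝟙_ C)) :
    x ◁ leftUnitEnd x' b = rightUnitEnd x b ▷ x' := by
  simp [leftUnitEnd_apply, rightUnitEnd_apply]

section Twist

variable (hC : ∀ x : C, ∃ y : C, Nonempty (x ⊗ y ≅ 𝟙_ C))
include hC

lemma leftUnitEnd_bijective_of_invertible (x : C) : Function.Bijective (leftUnitEnd x) := by
  obtain ⟨y, ⟨e⟩, ⟨f⟩⟩ := exists_tensor_iso_unit_and_symm hC x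
  exact leftUnitEnd_bijective e f

/-- The map `τ_x`. -/
noncomputable def twist (x : C) : End (𝟙_ C) →* End (𝟙_ C) :=
  (MulEquiv.ofBijective _ (leftUnitEnd_bijective_of_invertible hC x)).symm.toMonoidHom.comp
    (rightUnitEnd x)

lemma leftUnitEnd_twist (x : C) (a : End (𝟙_ C)) :
    leftUnitEnd x (twist hC x a) = rightUnitEnd x a :=
  (MulEquiv.ofBijective _ (leftUnitEnd_bijective_of_invertible hC x)).apply_symm_apply _

lemma eq_twist_iff {x : C} {a b : End (𝟙_ C)} :
    b = twist hC x a ↔ leftUnitEnd x b = rightUnitEnd x a := by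
  rw [← leftUnitEnd_twist hC x a]
  exact (leftUnitEnd_bijective_of_invertible hC x).injective.eq_iff.symm

lemma twist_congr {x x' : C} (φ : x ≅ x') : twist hC x = twist hC x' := by
  ext a
  rw [eq_twist_iff, leftUnitEnd_of_iso φ, rightUnitEnd_of_iso φ, leftUnitEnd_twist]

lemma twist_unit : twist hC (𝟙_ C) = MonoidHom.id _ := by
  ext a
  rw [MonoidHom.id_apply, eq_comm, eq_twist_iff, leftUnitEnd_unit, rightUnitEnd_unit]

lemma twist_comp_twist (x x' : C) : (twist hC x).comp (twist hC x') = twist hC (x ⊗ x') := by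
  ext a
  rw [eq_twist_iff, MonoidHom.comp_apply]
  calc leftUnitEnd (x ⊗ x') (twist hC x (twist hC x' a))
      = rightUnitEnd x (twist hC x' a) ▷ x' := by
        rw [leftUnitEnd_tensor, leftUnitEnd_twist]
    _ = x ◁ leftUnitEnd x' (twist hC x' a) := (whiskerLeft_leftUnitEnd x x' _).symm
    _ = rightUnitEnd (x ⊗ x') a := by rw [leftUnitEnd_twist, rightUnitEnd_tensor]

lemma twist_comp_twist_eq_id {x y : C} (e : x ⊗ y ≅ 𝟙_ C) :
    (twist hC x).comp (twist hC y) = MonoidHom.id _ := by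
  rw [twist_comp_twist, twist_congr hC e, twist_unit]

lemma twist_bijective (x : C) : Function.Bijective (twist hC x) := by
  obtain ⟨y, ⟨e⟩, ⟨f⟩⟩ := exists_tensor_iso_unit_and_symm hC x
  exact Function.bijective_iff_has_inverse.mpr ⟨twist hC y,
    DFunLike.congr_fun (twist_comp_twist_eq_id hC f),
    DFunLike.congr_fun (twist_comp_twist_eq_id hC e)⟩

end Twist

end CategoryTheory.MonoidalCategory

/-- For a 2-group (a monoidal groupoid in which every object is tensor-invertible up to
isomorphism), with `A := End (𝟙_ C)` and
`l_x(b) := λ_x ∘ (b ▷ x) ∘ λ_x⁻¹`, `r_x(a) := ρ_x ∘ (x ◁ a) ∘ ρ_x⁻¹`,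
there is a unique `τ_x(a)` with `l_x (τ_x a) = r_x a`; the maps `τ_x` depend only on the
isomorphism class of `x`, satisfy `τ_𝟙 = id` and `τ_x ∘ τ_{x'} = τ_{x ⊗ x'}`, and each `τ_x`
is a group automorphism of `A`. -/
theorem gerbal_two_group_pi0_action_on_pi1
    {C : Type*} [Groupoid C] [MonoidalCategory C]
    (h2grp : ∀ x : C, ∃ y : C, Nonempty ((x ⊗ y) ≅ 𝟙_ C)) :
    ∃ τ : C → End (𝟙_ C) → End (𝟙_ C),
      (∀ (x : C) (a : End (𝟙_ C)),
        ((λ_ x).inv ≫ (τ x a ▷ x) ≫ (λ_ x).hom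
            = (ρ_ x).inv ≫ (x ◁ a) ≫ (ρ_ x).hom) ∧
        (∀ b : End (𝟙_ C),
          ((λ_ x).inv ≫ (b ▷ x) ≫ (λ_ x).hom
              = (ρ_ x).inv ≫ (x ◁ a) ≫ (ρ_ x).hom) → b = τ x a)) ∧
      (∀ x x' : C, (x ≅ x') → τ x = τ x') ∧
      (τ (𝟙_ C) = id) ∧
      (∀ x x' : C, τ x ∘ τ x' = τ (x ⊗ x')) ∧
      (∀ x : C, Function.Bijective (τ x) ∧
        ∀ a b : End (𝟙_ C), τ x (a * b) = τ x a * τ x b) := by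
  refine ⟨fun x => twist h2grp x,
    fun x a => ⟨leftUnitEnd_twist h2grp x a, fun b => (eq_twist_iff h2grp).mpr⟩,
    fun x x' φ => congrArg _ (twist_congr h2grp φ), ?_, fun x x' => ?_,
    fun x => ⟨twist_bijective h2grp x, map_mul (twist h2grp x)⟩⟩
  · simp only [twist_unit, MonoidHom.coe_id]
  · simp only [← twist_comp_twist h2grp x x', MonoidHom.coe_comp]
end

section
/- Let G be a group, C a category, and (F, c) a gerbal action datum for G on C, i.e. functors F_g : C → C for each g ∈ G, each an equivalence of categories, together with natural isomorphisms c(g,h) : F_g ∘ F_h ≅ F_{gh}. Suppose ρ_g : Aut(𝟭_C) → Aut(𝟭_C) is induced by F_g for each g ∈ G (i.e. (ρ_g(u))_{F_g(X)} = F_g(u_X) for all u and all objects X). Then there exists a unique function a : G × G × G → Aut(𝟭_C) such that for all g1, g2, g3 ∈ G and all objects X, a(g1,g2,g3)_{F_{g1g2g3}(X)} ∘ c(g1g2,g3)_X ∘ c(g1,g2)_{F_{g3}(X)} = c(g1,g2g3)_X ∘ F_{g1}(c(g2,g3)_X), and this a satisfies the ρ-twisted 3-cocycle identity: ρ_{g1}(a(g2,g3,g4))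 · a(g1,g2g3,g4) · a(g1,g2,g3) = a(g1g2,g3,g4) · a(g1,g2,g3g4) for all g1,g2,g3,g4 ∈ G. -/
/-!
Whiskering with an equivalence `K` is fully faithful, so an automorphism of `K` is the
whiskering of a unique central automorphism `u ∈ Aut (𝟭 C)`; applied to the two ways of
composing `F g1 ∘ F g2 ∘ F g3 ≅ F (g1 g2 g3)` this gives existence and uniqueness of `a`.
For the cocycle identity, both sides are automorphisms of `𝟭 C`, so it suffices to compare
them on objects `F (g1 g2 g3 g4) X` (which exhaust `C` up to isomorphism) after precomposing
with the left-bracketed comparison `F g1 F g2 F g3 F g4 X ≅ F (g1 g2 g3 g4) X`. Each side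
turns it into the right-bracketed comparison, by the two routes around Mac Lane's pentagon;
the factor `ρ g1 (a g2 g3 g4)` enters when `a g2 g3 g4` is pushed through `F g1`.
-/

open CategoryTheory

namespace GerbalAction

section Center

variable {C D : Type*} [Category C] [Category D]

lemma aut_id_naturality (u : Aut (𝟭 C)) {X Y : C} (f : X ⟶ Y) :
    f ≫ u.hom.app Y = u.hom.app X ≫ f :=
  u.hom.naturality f

lemma aut_id_naturality_assoc (u : Aut (𝟭 C)) {X Y Z : C} (f : X ⟶ Y) (h : Y ⟶ Z) :
    f ≫ u.hom.app Y ≫ h = u.hom.app X ≫ f ≫ h := by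
  rw [← Category.assoc, aut_id_naturality, Category.assoc]

lemma aut_mul_hom_app (u v : Aut (𝟭 C)) (X : C) :
    (u * v).hom.app X = v.hom.app X ≫ u.hom.app X :=
  rfl

lemma aut_id_mul_comm (u v : Aut (𝟭 C)) : u * v = v * u := by
  ext X
  exact aut_id_naturality u (v.hom.app X)

lemma aut_id_ext_of_essSurj (K : D ⥤ C) [K.EssSurj] {u v : Aut (𝟭 C)}
    (h : ∀ X, u.hom.app (K.obj X) = v.hom.app (K.obj X)) : u = v := by
  ext Y
  rw [← cancel_epi (K.objObjPreimageIso Y).hom, aut_id_naturality, aut_id_naturality, h]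

lemma existsUnique_aut_id_app_eq (K : D ⥤ C) [K.IsEquivalence] (θ : K ≅ K) :
    ∃! u : Aut (𝟭 C), ∀ X, u.hom.app (K.obj X) = θ.hom.app X := by
  let W := (Functor.whiskeringLeft D C C).obj K
  refine ⟨W.preimageIso θ,
    NatTrans.congr_app (W.map_preimage (X := 𝟭 C) (Y := 𝟭 C) θ.hom),
    fun u hu => Iso.ext (W.map_injective ?_)⟩
  rw [W.preimageIso_hom, W.map_preimage]
  exact NatTrans.ext (funext hu)

lemma existsUnique_aut_id_comp_eq (K : D ⥤ C) [K.IsEquivalence] {L : D ⥤ C} (α β : L ≅ K) :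
    ∃! u : Aut (𝟭 C), ∀ X, α.hom.app X ≫ u.hom.app (K.obj X) = β.hom.app X := by
  simpa only [Iso.trans_hom, Iso.symm_hom, NatTrans.comp_app, ← Iso.app_inv, Iso.eq_inv_comp,
    Iso.app_hom] using existsUnique_aut_id_app_eq K (α.symm ≪≫ β)

end Center

variable {C : Type*} [Category C] {G : Type*} [Group G]

def IsAssociator (F : G → C ⥤ C) (c : ∀ g h : G, (F h ⋙ F g) ≅ F (g * h))
    (a : G → G → G → Aut (𝟭 C)) : Prop :=
  ∀ (g1 g2 g3 : G) (X : C),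
    (c g1 g2).hom.app ((F g3).obj X) ≫ (c (g1 * g2) g3).hom.app X ≫
        (a g1 g2 g3).hom.app ((F (g1 * g2 * g3)).obj X)
      = (F g1).map ((c g2 g3).hom.app X) ≫ (c g1 (g2 * g3)).hom.app X ≫
          eqToHom (by simp only [Functor.id_obj]; rw [mul_assoc])

def IsInduced (F : G → C ⥤ C) (ρ : G → Aut (𝟭 C) → Aut (𝟭 C)) : Prop :=
  ∀ (g : G) (u : Aut (𝟭 C)) (X : C), (ρ g u).hom.app ((F g).obj X) = (F g).map (u.hom.app X)

lemma existsUnique_isAssociator (F : G → C ⥤ C) (hF : ∀ g, (F g).IsEquivalence)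
    (c : ∀ g h : G, (F h ⋙ F g) ≅ F (g * h)) : ∃! a, IsAssociator F c a := by
  have h (g1 g2 g3 : G) : ∃! u : Aut (𝟭 C), ∀ X : C,
      (c g1 g2).hom.app ((F g3).obj X) ≫ (c (g1 * g2) g3).hom.app X ≫
          u.hom.app ((F (g1 * g2 * g3)).obj X)
        = (F g1).map ((c g2 g3).hom.app X) ≫ (c g1 (g2 * g3)).hom.app X ≫
            eqToHom (by simp only [Functor.id_obj]; rw [mul_assoc]) := by
    have := hF (g1 * g2 * g3)
    have hu := existsUnique_aut_id_comp_eq (F (g1 * g2 * g3))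
      (Functor.isoWhiskerLeft (F g3) (c g1 g2) ≪≫ c (g1 * g2) g3)
      (Functor.isoWhiskerRight (c g2 g3) (F g1) ≪≫ c g1 (g2 * g3) ≪≫
        eqToIso (by rw [mul_assoc]))
    simp only [Iso.trans_hom, NatTrans.comp_app, eqToIso.hom, eqToHom_app] at hu
    simpa only [Category.assoc, Functor.isoWhiskerLeft_hom, Functor.whiskerLeft_app,
      Functor.isoWhiskerRight_hom, Functor.whiskerRight_app] using hu
  choose a ha using fun g1 g2 g3 => (h g1 g2 g3).exists
  exact ⟨a, ha, fun a' ha' =>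
    funext₃ fun g1 g2 g3 => (h g1 g2 g3).unique (ha' g1 g2 g3) (ha g1 g2 g3)⟩

section Comparison

variable (F : G → C ⥤ C) (c : ∀ g h : G, (F h ⋙ F g) ≅ F (g * h))

lemma eqToHom_comp_hom_app_left {g g' : G} (e : g = g') (h : G) (X : C) :
    eqToHom (by rw [e]) ≫ (c g' h).hom.app X = (c g h).hom.app X ≫ eqToHom (by rw [e]) := by
  subst e
  simp

lemma eqToHom_comp_hom_app_right (g : G) {h h' : G} (e : h = h') (X : C) :
    eqToHom (by rw [e]) ≫ (c g h').hom.app X = (c g h).hom.app X ≫ eqToHom (by rw [e]) := by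
  subst e
  simp

lemma hom_app_comp_induced_app {ρ : G → Aut (𝟭 C) → Aut (𝟭 C)} (hρ : IsInduced F ρ)
    (u : Aut (𝟭 C)) (g h : G) (X : C) :
    (c g h).hom.app X ≫ (ρ g u).hom.app ((F (g * h)).obj X)
      = (F g).map (u.hom.app ((F h).obj X)) ≫ (c g h).hom.app X := by
  rw [aut_id_naturality]
  exact congrArg (· ≫ (c g h).hom.app X) (hρ g u ((F h).obj X))

end Comparison

namespace IsAssociator

variable {F : G → C ⥤ C} {c : ∀ g h : G, (F h ⋙ F g) ≅ F (g * h)}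
  {a : G → G → G → Aut (𝟭 C)}

lemma cocycle_lhs_app (ha : IsAssociator F c a) {ρ : G → Aut (𝟭 C) → Aut (𝟭 C)}
    (hρ : IsInduced F ρ) (g1 g2 g3 g4 : G) (X : C) :
    (c g1 g2).hom.app ((F g3).obj ((F g4).obj X)) ≫ (c (g1 * g2) g3).hom.app ((F g4).obj X) ≫
      (c (g1 * g2 * g3) g4).hom.app X ≫
        (ρ g1 (a g2 g3 g4) * a g1 (g2 * g3) g4 * a g1 g2 g3).hom.app
          ((F (g1 * g2 * g3 * g4)).obj X)
    = (F g1).map ((F g2).map ((c g3 g4).hom.app X)) ≫ (F g1).map ((c g2 (g3 * g4)).hom.app X) ≫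
      (c g1 (g2 * (g3 * g4))).hom.app X ≫ eqToHom (by simp only [Functor.id_obj, mul_assoc]) := by
  simp only [aut_mul_hom_app]
  rw [aut_id_naturality_assoc (a g1 g2 g3) ((c (g1 * g2 * g3) g4).hom.app X)]
  simp only [Functor.comp_obj]
  rw [reassoc_of% (ha g1 g2 g3 ((F g4).obj X)),
    reassoc_of% (eqToHom_comp_hom_app_left F c (mul_assoc g1 g2 g3).symm g4 X),
    aut_id_naturality_assoc (a g1 (g2 * g3) g4) (eqToHom _),
    reassoc_of% (ha g1 (g2 * g3) g4 X), eqToHom_trans_assoc, aut_id_naturality,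
    reassoc_of% (hom_app_comp_induced_app F c hρ)]
  have h234 := congrArg (F g1).map (ha g2 g3 g4 X)
  simp only [Functor.map_comp, eqToHom_map] at h234
  rw [reassoc_of% h234,
    reassoc_of% (eqToHom_comp_hom_app_right F c g1 (mul_assoc g2 g3 g4).symm X), eqToHom_trans]

lemma cocycle_rhs_app (ha : IsAssociator F c a) (g1 g2 g3 g4 : G) (X : C) :
    (c g1 g2).hom.app ((F g3).obj ((F g4).obj X)) ≫ (c (g1 * g2) g3).hom.app ((F g4).obj X) ≫
      (c (g1 * g2 * g3) g4).hom.app X ≫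
        (a (g1 * g2) g3 g4 * a g1 g2 (g3 * g4)).hom.app ((F (g1 * g2 * g3 * g4)).obj X)
    = (F g1).map ((F g2).map ((c g3 g4).hom.app X)) ≫ (F g1).map ((c g2 (g3 * g4)).hom.app X) ≫
      (c g1 (g2 * (g3 * g4))).hom.app X ≫ eqToHom (by simp only [Functor.id_obj, mul_assoc]) := by
  rw [aut_id_mul_comm, aut_mul_hom_app, reassoc_of% (ha (g1 * g2) g3 g4 X),
    ← (c g1 g2).hom.naturality_assoc, aut_id_naturality, reassoc_of% (ha g1 g2 (g3 * g4) X)]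
  simp only [Functor.comp_map, eqToHom_trans]

lemma cocycle (ha : IsAssociator F c a) (hF : ∀ g, (F g).EssSurj)
    {ρ : G → Aut (𝟭 C) → Aut (𝟭 C)} (hρ : IsInduced F ρ) (g1 g2 g3 g4 : G) :
    ρ g1 (a g2 g3 g4) * a g1 (g2 * g3) g4 * a g1 g2 g3
      = a (g1 * g2) g3 g4 * a g1 g2 (g3 * g4) :=
  aut_id_ext_of_essSurj (F (g1 * g2 * g3 * g4)) fun X => by
    rw [← cancel_epi ((c g1 g2).hom.app ((F g3).obj ((F g4).obj X)) ≫
      (c (g1 * g2) g3).hom.app ((F g4).obj X) ≫ (c (g1 * g2 * g3) g4).hom.app X)]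
    simp only [Category.assoc, ha.cocycle_lhs_app hρ, ha.cocycle_rhs_app]

end IsAssociator

end GerbalAction

/-- Given a gerbal action datum `(F, c)` of a group `G` on a category `C` (equivalences
`F g` with natural isomorphisms `c g h : F h ⋙ F g ≅ F (g * h)`), and `ρ g` induced by
`F g` on `Aut (𝟭 C)`, there is a unique `a : G → G → G → Aut (𝟭 C)` satisfying the
associativity-comparison equation, and it satisfies the `ρ`-twisted 3-cocycle identity. -/
theorem gerbal_action_three_cocycle
    {G : Type*} [Group G] {C : Type*} [Category C]
    (F : G → C ⥤ C) (hF : ∀ g, (F g).IsEquivalence)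
    (c : ∀ g h : G, (F h ⋙ F g) ≅ F (g * h))
    (ρ : G → Aut (𝟭 C) → Aut (𝟭 C))
    (hρ : ∀ (g : G) (u : Aut (𝟭 C)) (X : C),
      (ρ g u).hom.app ((F g).obj X) = (F g).map (u.hom.app X)) :
    ∃ a : G → G → G → Aut (𝟭 C),
      (∀ (g1 g2 g3 : G) (X : C),
        (c g1 g2).hom.app ((F g3).obj X) ≫ (c (g1 * g2) g3).hom.app X ≫
            (a g1 g2 g3).hom.app ((F (g1 * g2 * g3)).obj X)
          = (F g1).map ((c g2 g3).hom.app X) ≫ (c g1 (g2 * g3)).hom.app X ≫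
              eqToHom (by simp only [Functor.id_obj]; rw [mul_assoc])) ∧
      (∀ (g1 g2 g3 g4 : G),
        ρ g1 (a g2 g3 g4) * a g1 (g2 * g3) g4 * a g1 g2 g3
          = a (g1 * g2) g3 g4 * a g1 g2 (g3 * g4)) ∧
      (∀ a' : G → G → G → Aut (𝟭 C),
        (∀ (g1 g2 g3 : G) (X : C),
          (c g1 g2).hom.app ((F g3).obj X) ≫ (c (g1 * g2) g3).hom.app X ≫
              (a' g1 g2 g3).hom.app ((F (g1 * g2 * g3)).obj X)
            = (F g1).map ((c g2 g3).hom.app X) ≫ (c g1 (g2 * g3)).hom.app X ≫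
                eqToHom (by simp only [Functor.id_obj]; rw [mul_assoc])) → a' = a) := by
  obtain ⟨a, ha, ha_unique⟩ := GerbalAction.existsUnique_isAssociator F hF c
  exact ⟨a, ha, ha.cocycle (fun g => (hF g).essSurj) hρ, ha_unique⟩
end

section
/- Let G be a group, C a category, and let (F, c) and (F, c') be two gerbal action data for G on C with the same underlying equivalences F_g, and suppose ρ_g : Aut(𝟭_C) → Aut(𝟭_C) is induced by F_g for each g. Suppose d : G × G → Aut(𝟭_C) is such that c'(g,h)_X = c(g,h)_X ∘ d(g,h)_{F_g(F_h(X))} for all g,h ∈ G and all objects X. Let a and a' be the 3-cochains associated to (F,c) and (F,c') respectively (characterized by a(g1,g2,g3)_{F_{g1g2g3}(X)} ∘ c(g1g2,g3)_X ∘ c(g1,g2)_{F_{g3}(X)} = c(g1,g2g3)_X ∘ F_{g1}(c(g2,g3)_X), and likewise for a', c'). Then for all g1,g2,g3 ∈ G: a'(g1,g2,g3) · a(g1,g2,g3)⁻¹ = ρ_{g1}(d(g2,g3)) · d(g1,g2g3) · d(g1g2,g3)⁻¹ · d(g1,g2)⁻¹; that is, the two cocycles differ by the ρ-twisted coboundary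 of d, so they define the same cohomology class. -/
open CategoryTheory

/-!
Substitute `c' = d · c` into the equation defining `a'`. Components of elements of `Aut (𝟭 C)`
commute with every morphism, and `hρ` turns `F g₁` applied to `d g₂ g₃` into such a component, so
all of them can be moved to the end; comparing with the equation defining `a` and cancelling the
isomorphisms `c` gives `d g₁ g₂ * d (g₁ g₂) g₃ * a' = ρ g₁ (d g₂ g₃) * d g₁ (g₂ g₃) * a` on the
image of `F (g₁ g₂ g₃)`, hence everywhere since that functor is essentially surjective. As
`Aut (𝟭 C)` is abelian, this rearranges to the claim.
-/

namespace CategoryTheory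

variable {C : Type*} [Category C]

lemma NatTrans.ext_of_essSurj {D E : Type*} [Category D] [Category E] {F G : C ⥤ E}
    (T : D ⥤ C) [T.EssSurj] {α β : F ⟶ G} (h : ∀ X, α.app (T.obj X) = β.app (T.obj X)) :
    α = β := by
  ext Y
  rw [← cancel_epi (F.map (T.objObjPreimageIso Y).hom), α.naturality, β.naturality, h]

lemma Aut.mul_comm_id (u v : Aut (𝟭 C)) : u * v = v * u :=
  Iso.ext (NatTrans.id_comm v.hom u.hom)

lemma Aut.hom_app_id_comp (u : Aut (𝟭 C)) {X Y : C} (f : X ⟶ Y) :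
    u.hom.app X ≫ f = f ≫ u.hom.app Y :=
  (u.hom.naturality f).symm

lemma Aut.hom_app_id_comp_assoc (u : Aut (𝟭 C)) {X Y Z : C} (f : X ⟶ Y) (g : Y ⟶ Z) :
    u.hom.app X ≫ f ≫ g = f ≫ u.hom.app Y ≫ g := by
  rw [← Category.assoc, Aut.hom_app_id_comp, Category.assoc]

lemma Aut.mul_hom_app_id (u v : Aut (𝟭 C)) (X : C) :
    (u * v).hom.app X = u.hom.app X ≫ v.hom.app X :=
  Aut.hom_app_id_comp v (u.hom.app X)

section Twist

variable {G : Type*} [Group G] {F : G → C ⥤ C} {c c' : ∀ g h : G, (F h ⋙ F g) ≅ F (g * h)}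
  {d : G → G → Aut (𝟭 C)}

lemma hom_app_comp_hom_app_of_twist
    (hd : ∀ (g h : G) (X : C),
      (c' g h).hom.app X = (d g h).hom.app ((F g).obj ((F h).obj X)) ≫ (c g h).hom.app X)
    (g1 g2 g3 : G) (X : C) (u : Aut (𝟭 C)) :
    (c' g1 g2).hom.app ((F g3).obj X) ≫ (c' (g1 * g2) g3).hom.app X ≫
        u.hom.app ((F (g1 * g2 * g3)).obj X)
      = (c g1 g2).hom.app ((F g3).obj X) ≫ (c (g1 * g2) g3).hom.app X ≫
          (d g1 g2 * d (g1 * g2) g3 * u).hom.app ((F (g1 * g2 * g3)).obj X) := by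
  simp only [hd, Category.assoc]
  rw [Aut.hom_app_id_comp_assoc (d (g1 * g2) g3), Aut.hom_app_id_comp_assoc (d g1 g2),
    Aut.hom_app_id_comp_assoc (d g1 g2)]
  simp only [Aut.mul_hom_app_id, Category.assoc]

lemma map_hom_app_comp_hom_app_of_twist
    (hd : ∀ (g h : G) (X : C),
      (c' g h).hom.app X = (d g h).hom.app ((F g).obj ((F h).obj X)) ≫ (c g h).hom.app X)
    (ρ : G → Aut (𝟭 C) → Aut (𝟭 C))
    (hρ : ∀ (g : G) (u : Aut (𝟭 C)) (X : C),
      (ρ g u).hom.app ((F g).obj X) = (F g).map (u.hom.app X))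
    (g1 g2 g3 : G) (X : C) {Y : C} (f : (F (g1 * (g2 * g3))).obj X ⟶ Y) :
    (F g1).map ((c' g2 g3).hom.app X) ≫ (c' g1 (g2 * g3)).hom.app X ≫ f
      = (F g1).map ((c g2 g3).hom.app X) ≫ (c g1 (g2 * g3)).hom.app X ≫ f ≫
          (ρ g1 (d g2 g3) * d g1 (g2 * g3)).hom.app Y := by
  simp only [hd, Functor.map_comp, ← hρ, Category.assoc]
  rw [Aut.hom_app_id_comp_assoc (d g1 (g2 * g3)), Aut.hom_app_id_comp (d g1 (g2 * g3)),
    Aut.hom_app_id_comp_assoc (ρ g1 (d g2 g3)), Aut.hom_app_id_comp_assoc (ρ g1 (d g2 g3)),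
    Aut.hom_app_id_comp_assoc (ρ g1 (d g2 g3)), Aut.mul_hom_app_id]

end Twist

end CategoryTheory

/-- If two gerbal action data `(F, c)` and `(F, c')` for `G` on `C` differ by
`d : G × G → Aut (𝟭 C)`, then the associated 3-cochains `a`, `a'` differ by the
`ρ`-twisted coboundary of `d`. -/
theorem gerbal_action_cocycle_well_defined
    {G : Type*} [Group G] {C : Type*} [Category C]
    (F : G → C ⥤ C) (hF : ∀ g, (F g).IsEquivalence)
    (c c' : ∀ g h : G, (F h ⋙ F g) ≅ F (g * h))
    (ρ : G → Aut (𝟭 C) → Aut (𝟭 C))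
    (hρ : ∀ (g : G) (u : Aut (𝟭 C)) (X : C),
      (ρ g u).hom.app ((F g).obj X) = (F g).map (u.hom.app X))
    (d : G → G → Aut (𝟭 C))
    (hd : ∀ (g h : G) (X : C),
      (c' g h).hom.app X
        = (d g h).hom.app ((F g).obj ((F h).obj X)) ≫ (c g h).hom.app X)
    (a a' : G → G → G → Aut (𝟭 C))
    (ha : ∀ (g1 g2 g3 : G) (X : C),
      (c g1 g2).hom.app ((F g3).obj X) ≫ (c (g1 * g2) g3).hom.app X ≫
          (a g1 g2 g3).hom.app ((F (g1 * g2 * g3)).obj X)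
        = (F g1).map ((c g2 g3).hom.app X) ≫ (c g1 (g2 * g3)).hom.app X ≫
            eqToHom (by simp only [Functor.id_obj]; rw [mul_assoc]))
    (ha' : ∀ (g1 g2 g3 : G) (X : C),
      (c' g1 g2).hom.app ((F g3).obj X) ≫ (c' (g1 * g2) g3).hom.app X ≫
          (a' g1 g2 g3).hom.app ((F (g1 * g2 * g3)).obj X)
        = (F g1).map ((c' g2 g3).hom.app X) ≫ (c' g1 (g2 * g3)).hom.app X ≫
            eqToHom (by simp only [Functor.id_obj]; rw [mul_assoc])) :
    ∀ g1 g2 g3 : G,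
      a' g1 g2 g3 * (a g1 g2 g3)⁻¹
        = ρ g1 (d g2 g3) * d g1 (g2 * g3) * (d (g1 * g2) g3)⁻¹ * (d g1 g2)⁻¹ := by
  intro g1 g2 g3
  have := hF (g1 * g2 * g3)
  have key : d g1 g2 * d (g1 * g2) g3 * a' g1 g2 g3
      = ρ g1 (d g2 g3) * d g1 (g2 * g3) * a g1 g2 g3 := by
    refine Iso.ext (NatTrans.ext_of_essSurj (F (g1 * g2 * g3)) fun X => ?_)
    have h' := ha' g1 g2 g3 X
    rwa [hom_app_comp_hom_app_of_twist hd, map_hom_app_comp_hom_app_of_twist hd ρ hρ,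
      ← reassoc_of% (ha g1 g2 g3 X), cancel_epi, cancel_epi] at h'
  rw [eq_inv_mul_of_mul_eq key, ← mul_assoc, mul_inv_cancel_right, Aut.mul_comm_id, mul_inv_rev,
    ← mul_assoc]
end

section
/- Let G be a group, C a category, (F, c) a gerbal action datum for G on C, ρ_g induced by F_g for each g, and a the associated 3-cochain (characterized by a(g1,g2,g3)_{F_{g1g2g3}(X)} ∘ c(g1g2,g3)_X ∘ c(g1,g2)_{F_{g3}(X)} = c(g1,g2g3)_X ∘ F_{g1}(c(g2,g3)_X)). Suppose there exists d : G × G → Aut(𝟭_C) with a(g1,g2,g3) = ρ_{g1}(d(g2,g3)) · d(g1,g2g3) · d(g1g2,g3)⁻¹ · d(g1,g2)⁻¹ for all g1,g2,g3 (i.e. a is a ρ-twisted coboundary). Then the modified isomorphisms c'(g,h)_X := c(g,h)_X ∘ (d(g,h)⁻¹)_{F_g(F_h(X))} upgrade the gerbal action to a genuine one: for all g1,g2,g3 ∈ G and all objects X, c'(g1g2,g3)_X ∘ c'(g1,g2)_{F_{g3}(X)} = c'(g1,g2g3)_X ∘ F_{g1}(c'(g2,g3)_X). -/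
/-!
Every component of an automorphism of `𝟭 C` commutes with every morphism of `C`, so all the
automorphism factors in both sides of the cocycle identity for `c'` can be slid to the common
source `F g₁ (F g₂ (F g₃ X))`, where they multiply in the abelian group `Aut (𝟭 C)`. The
factor `F g₁ (d(g₂,g₃)⁻¹)` becomes `ρ g₁ (d(g₂,g₃))⁻¹` there, because `ρ g₁` is induced by
`F g₁`. The identity for `c'` then reduces to the defining identity of `a` combined with the
coboundary formula for `a` in terms of `d`.
-/

open CategoryTheory

namespace CategoryTheory.Aut

variable {C : Type*} [Category C]

lemma hom_app_naturality_id (u : Aut (𝟭 C)) {Y Z : C} (f : Y ⟶ Z) :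
    f ≫ u.hom.app Z = u.hom.app Y ≫ f :=
  CatCenter.naturality u.hom f

lemma mul_hom_app (u v : Aut (𝟭 C)) (Y : C) :
    (u * v).hom.app Y = v.hom.app Y ≫ u.hom.app Y := rfl

lemma hom_app_comp_hom_app_comp (u v : Aut (𝟭 C)) {Y Z W : C} (f : Y ⟶ Z) (g : Z ⟶ W) :
    u.hom.app Y ≫ f ≫ v.hom.app Z ≫ g = (v * u).hom.app Y ≫ f ≫ g := by
  rw [← Category.assoc f, hom_app_naturality_id, mul_hom_app, Category.assoc, Category.assoc]

-- A mixin rather than a `CommGroup` instance, so that `*` on `Aut (𝟭 C)` still elaborates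
-- through the `Group` instance of `Aut`.
instance : IsMulCommutative (Aut (𝟭 C)) where
  is_comm.comm u v := by
    ext Y
    rw [mul_hom_app, mul_hom_app]
    exact (hom_app_naturality_id v (u.hom.app Y)).symm

lemma map_inv_hom_app {D : Type*} [Category D] {F : C ⥤ D} {u : Aut (𝟭 C)} {v : Aut (𝟭 D)}
    {X : C} (h : v.hom.app (F.obj X) = F.map (u.hom.app X)) :
    F.map ((u⁻¹).hom.app X) = (v⁻¹).hom.app (F.obj X) :=
  congrArg Iso.inv (Iso.ext h.symm : F.mapIso (u.app X) = v.app (F.obj X))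

end CategoryTheory.Aut

/-- If the 3-cochain `a` of a gerbal action datum `(F, c)` is a `ρ`-twisted coboundary of
`d`, then the modified isomorphisms `c'(g,h)_X := c(g,h)_X ∘ (d(g,h)⁻¹)_{F_g F_h X}`
upgrade the gerbal action to a genuine action. -/
theorem gerbal_action_upgrade_to_genuine
    {G : Type*} [Group G] {C : Type*} [Category C]
    (F : G → C ⥤ C)
    (c : ∀ g h : G, (F h ⋙ F g) ≅ F (g * h))
    (ρ : G → Aut (𝟭 C) → Aut (𝟭 C))
    (hρ : ∀ (g : G) (u : Aut (𝟭 C)) (X : C),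
      (ρ g u).hom.app ((F g).obj X) = (F g).map (u.hom.app X))
    (a : G → G → G → Aut (𝟭 C))
    (ha : ∀ (g1 g2 g3 : G) (X : C),
      (c g1 g2).hom.app ((F g3).obj X) ≫ (c (g1 * g2) g3).hom.app X ≫
          (a g1 g2 g3).hom.app ((F (g1 * g2 * g3)).obj X)
        = (F g1).map ((c g2 g3).hom.app X) ≫ (c g1 (g2 * g3)).hom.app X ≫
            eqToHom (by simp only [Functor.id_obj]; rw [mul_assoc]))
    (d : G → G → Aut (𝟭 C))
    (hd : ∀ g1 g2 g3 : G,
      a g1 g2 g3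
        = ρ g1 (d g2 g3) * d g1 (g2 * g3) * (d (g1 * g2) g3)⁻¹ * (d g1 g2)⁻¹)
    (c' : ∀ g h : G, (F h ⋙ F g) ≅ F (g * h))
    (hc' : ∀ (g h : G) (X : C),
      (c' g h).hom.app X
        = ((d g h)⁻¹).hom.app ((F g).obj ((F h).obj X)) ≫ (c g h).hom.app X) :
    ∀ (g1 g2 g3 : G) (X : C),
      (c' g1 g2).hom.app ((F g3).obj X) ≫ (c' (g1 * g2) g3).hom.app X
        = (F g1).map ((c' g2 g3).hom.app X) ≫ (c' g1 (g2 * g3)).hom.app X ≫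
            eqToHom (by rw [mul_assoc]) := by
  intro g1 g2 g3 X
  have hcoboundary : (d (g1 * g2) g3)⁻¹ * (d g1 g2)⁻¹
      = a g1 g2 g3 * ((d g1 (g2 * g3))⁻¹ * (ρ g1 (d g2 g3))⁻¹) := by
    rw [← mul_inv_rev (ρ g1 (d g2 g3)), eq_mul_inv_iff_mul_eq, hd]
    ac_rfl
  simp only [hc', Functor.map_comp, Aut.map_inv_hom_app (hρ g1 (d g2 g3) _),
    Category.assoc, Aut.hom_app_comp_hom_app_comp]
  rw [hcoboundary, Aut.mul_hom_app, Category.assoc, ← Aut.hom_app_naturality_id (a g1 g2 g3),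
    Category.assoc, ha]
end

section
/- Let G be a group, H a normal subgroup of G, K := G/H, and π : Ĥ → H a surjective group homomorphism whose kernel A := ker π is contained in the center of Ĥ. Suppose ρ̃ : G → Aut(Ĥ) is an action of G on Ĥ by group automorphisms such that: π(ρ̃_g(x)) = g · π(x) · g⁻¹ for all g ∈ G, x ∈ Ĥ; ρ̃_h = c_h for every h ∈ H (where c_h is conjugation by any element of π⁻¹(h)); and ρ̃_g(a) = a for all g ∈ G, a ∈ A (so (G, Ĥ) is a gerbal pair). Let s : K → G be a set-theoretic section of the quotient map with s(1) = 1, set t(k,k') := s(kk')⁻¹ s(k) s(k') (which lies in H), and choose arbitrary lifts t̃(k,k') ∈ Ĥ with π(t̃(k,k')) = t(k,k'). Then for all k1,k2,k3 ∈ K the element e(k1,k2,k3) := t̃(k1,k2k3) · t̃(k2,k3) · (t̃(k1k2,k3) · ρ̃_{s(k3)⁻¹}(t̃(k1,k2)))⁻¹ belongs to A, and e satisfies the 3-cocycle identity e(k2,k3,k4) · e(k1,k2k3,k4) · e(k1,k2,k3) = e(k1k2,k3,k4) · e(k1,k2,k3k4) for all k1,k2,k3,k4 ∈ K. -/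
/-!
Since `s(k₁) s(k₂) = s(k₁k₂) t(k₁,k₂)` and `ρ̃` restricts to conjugation on `H`, the automorphisms
`ρ̃_{s(k₂)⁻¹} ρ̃_{s(k₁)⁻¹}` and `ρ̃_{s(k₁k₂)⁻¹}` differ by conjugation by `t̃(k₁,k₂)`. With this, the
product `t̃(k₁,k₂k₃k₄) t̃(k₂,k₃k₄) t̃(k₃,k₄)` can be expanded starting from its right pair or from its
left pair; both expansions end in the same element, preceded by the two sides of the cocycle
identity, because the values of `e` are central and fixed by `ρ̃` and so can be moved to the front.
Centrality of `ker π` itself comes from `ρ̃ ∘ π = conj` and `ρ̃_1 = id`.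
-/

section LiftObstruction

variable {G Hhat K : Type*} [Group G] [Group Hhat]

def liftObstruction [Mul K] (ρ : G →* MulAut Hhat) (s : K → G) (t : K → K → Hhat)
    (k₁ k₂ k₃ : K) : Hhat :=
  t k₁ (k₂ * k₃) * t k₂ k₃ * (t (k₁ * k₂) k₃ * ρ (s k₃)⁻¹ (t k₁ k₂))⁻¹

theorem mul_eq_liftObstruction_mul [Mul K] (ρ : G →* MulAut Hhat) (s : K → G)
    (t : K → K → Hhat) (k₁ k₂ k₃ : K) :
    t k₁ (k₂ * k₃) * t k₂ k₃ =
      liftObstruction ρ s t k₁ k₂ k₃ * (t (k₁ * k₂) k₃ * ρ (s k₃)⁻¹ (t k₁ k₂)) := by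
  rw [liftObstruction, inv_mul_cancel_right]

variable {φ : Hhat →* G} {ρ : G →* MulAut Hhat}

theorem ker_le_center_of_apply_eq_conj (hconj : ∀ y, ρ (φ y) = MulAut.conj y) :
    φ.ker ≤ Subgroup.center Hhat := by
  intro a ha
  have hconj_a : MulAut.conj a = 1 := by rw [← hconj, ha, map_one]
  refine Subgroup.mem_center_iff.mpr fun x => ?_
  have hx := congrArg (· x) hconj_a
  simp only [MulAut.conj_apply, MulAut.one_apply] at hx
  exact (mul_inv_eq_iff_eq_mul.mp hx).symm

theorem apply_inv_mul_eq_mul_apply_inv (hconj : ∀ y, ρ (φ y) = MulAut.conj y) {g g' : G}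
    {y : Hhat} (hy : φ y = g⁻¹ * g') (x : Hhat) : ρ g⁻¹ x * y = y * ρ g'⁻¹ x := by
  have hg' : g'⁻¹ = (φ y)⁻¹ * g⁻¹ := by rw [hy]; group
  rw [hg', map_mul, map_inv ρ (φ y), hconj, MulAut.mul_apply, MulAut.conj_inv_apply]
  group

variable [Semigroup K] {s : K → G} {t : K → K → Hhat}

local notation "ε" => liftObstruction ρ s t

theorem map_liftObstruction (hlift : ∀ g x, φ (ρ g x) = g * φ x * g⁻¹)
    (ht : ∀ k k', φ (t k k') = (s (k * k'))⁻¹ * s k * s k') (k₁ k₂ k₃ : K) :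
    φ (ε k₁ k₂ k₃) = 1 := by
  rw [liftObstruction, map_mul_inv, map_mul, map_mul, hlift, ht, ht, ht, ht, mul_assoc k₁]
  group

theorem commute_liftObstruction (hlift : ∀ g x, φ (ρ g x) = g * φ x * g⁻¹)
    (hconj : ∀ y, ρ (φ y) = MulAut.conj y)
    (ht : ∀ k k', φ (t k k') = (s (k * k'))⁻¹ * s k * s k') (x : Hhat) (k₁ k₂ k₃ : K) :
    Commute x (ε k₁ k₂ k₃) :=
  Subgroup.mem_center_iff.mp
    (ker_le_center_of_apply_eq_conj hconj (map_liftObstruction hlift ht k₁ k₂ k₃)) x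

theorem apply_inv_mul_lift_eq (hconj : ∀ y, ρ (φ y) = MulAut.conj y)
    (ht : ∀ k k', φ (t k k') = (s (k * k'))⁻¹ * s k * s k') (x : Hhat) (k₁ k₂ : K) :
    ρ (s (k₁ * k₂))⁻¹ x * t k₁ k₂ = t k₁ k₂ * ρ (s k₂)⁻¹ (ρ (s k₁)⁻¹ x) := by
  rw [apply_inv_mul_eq_mul_apply_inv hconj (by rw [ht, mul_assoc]) x, mul_inv_rev, map_mul,
    MulAut.mul_apply]

theorem lift_triple_product_eq_via_right_pair (hlift : ∀ g x, φ (ρ g x) = g * φ x * g⁻¹)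
    (hconj : ∀ y, ρ (φ y) = MulAut.conj y) (hfix : ∀ g a, a ∈ φ.ker → ρ g a = a)
    (ht : ∀ k k', φ (t k k') = (s (k * k'))⁻¹ * s k * s k') (k₁ k₂ k₃ k₄ : K) :
    t k₁ (k₂ * (k₃ * k₄)) * (t k₂ (k₃ * k₄) * t k₃ k₄) =
      ε k₂ k₃ k₄ * ε k₁ (k₂ * k₃) k₄ * ε k₁ k₂ k₃ *
        (t (k₁ * k₂ * k₃) k₄ * ρ (s k₄)⁻¹ (t (k₁ * k₂) k₃ * ρ (s k₃)⁻¹ (t k₁ k₂))) :=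
  calc t k₁ (k₂ * (k₃ * k₄)) * (t k₂ (k₃ * k₄) * t k₃ k₄)
      = t k₁ (k₂ * (k₃ * k₄)) * (ε k₂ k₃ k₄ * (t (k₂ * k₃) k₄ * ρ (s k₄)⁻¹ (t k₂ k₃))) := by
        rw [mul_eq_liftObstruction_mul ρ s]
    _ = ε k₂ k₃ k₄ * (t k₁ (k₂ * k₃ * k₄) * t (k₂ * k₃) k₄ * ρ (s k₄)⁻¹ (t k₂ k₃)) := by
        rw [(commute_liftObstruction hlift hconj ht _ _ _ _).left_comm, mul_assoc k₂,
          mul_assoc (t _ _)]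
    _ = ε k₂ k₃ k₄ * (ε k₁ (k₂ * k₃) k₄ *
          (t (k₁ * (k₂ * k₃)) k₄ * ρ (s k₄)⁻¹ (t k₁ (k₂ * k₃))) * ρ (s k₄)⁻¹ (t k₂ k₃)) := by
        rw [mul_eq_liftObstruction_mul ρ s]
    _ = ε k₂ k₃ k₄ * ε k₁ (k₂ * k₃) k₄ *
          (t (k₁ * (k₂ * k₃)) k₄ * ρ (s k₄)⁻¹ (t k₁ (k₂ * k₃) * t k₂ k₃)) := by
        rw [map_mul]; group
    _ = ε k₂ k₃ k₄ * ε k₁ (k₂ * k₃) k₄ * (t (k₁ * (k₂ * k₃)) k₄ *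
          ρ (s k₄)⁻¹ (ε k₁ k₂ k₃ * (t (k₁ * k₂) k₃ * ρ (s k₃)⁻¹ (t k₁ k₂)))) := by
        rw [mul_eq_liftObstruction_mul ρ s]
    _ = _ := by
        rw [map_mul, hfix _ _ (map_liftObstruction hlift ht k₁ k₂ k₃),
          (commute_liftObstruction hlift hconj ht _ _ _ _).left_comm, mul_assoc k₁ k₂ k₃,
          ← mul_assoc _ (ε k₁ k₂ k₃)]

theorem lift_triple_product_eq_via_left_pair (hconj : ∀ y, ρ (φ y) = MulAut.conj y)
    (ht : ∀ k k', φ (t k k') = (s (k * k'))⁻¹ * s k * s k') (k₁ k₂ k₃ k₄ : K) :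
    t k₁ (k₂ * (k₃ * k₄)) * (t k₂ (k₃ * k₄) * t k₃ k₄) =
      ε k₁ k₂ (k₃ * k₄) * ε (k₁ * k₂) k₃ k₄ *
        (t (k₁ * k₂ * k₃) k₄ * ρ (s k₄)⁻¹ (t (k₁ * k₂) k₃ * ρ (s k₃)⁻¹ (t k₁ k₂))) :=
  calc t k₁ (k₂ * (k₃ * k₄)) * (t k₂ (k₃ * k₄) * t k₃ k₄)
      = ε k₁ k₂ (k₃ * k₄) * t (k₁ * k₂) (k₃ * k₄) *
          (ρ (s (k₃ * k₄))⁻¹ (t k₁ k₂) * t k₃ k₄) := by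
        rw [← mul_assoc, mul_eq_liftObstruction_mul ρ s]; group
    _ = ε k₁ k₂ (k₃ * k₄) * (t (k₁ * k₂) (k₃ * k₄) * t k₃ k₄) *
          ρ (s k₄)⁻¹ (ρ (s k₃)⁻¹ (t k₁ k₂)) := by
        rw [apply_inv_mul_lift_eq hconj ht]; group
    _ = _ := by
        rw [mul_eq_liftObstruction_mul ρ s, map_mul]; group

theorem liftObstruction_cocycle (hlift : ∀ g x, φ (ρ g x) = g * φ x * g⁻¹)
    (hconj : ∀ y, ρ (φ y) = MulAut.conj y) (hfix : ∀ g a, a ∈ φ.ker → ρ g a = a)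
    (ht : ∀ k k', φ (t k k') = (s (k * k'))⁻¹ * s k * s k') (k₁ k₂ k₃ k₄ : K) :
    ε k₂ k₃ k₄ * ε k₁ (k₂ * k₃) k₄ * ε k₁ k₂ k₃ = ε (k₁ * k₂) k₃ k₄ * ε k₁ k₂ (k₃ * k₄) := by
  rw [(commute_liftObstruction hlift hconj ht _ k₁ k₂ (k₃ * k₄)).eq]
  exact mul_right_cancel <|
    (lift_triple_product_eq_via_right_pair hlift hconj hfix ht k₁ k₂ k₃ k₄).symm.trans
      (lift_triple_product_eq_via_left_pair hconj ht k₁ k₂ k₃ k₄)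

end LiftObstruction

theorem gerbal_pair_three_cocycle_general
    {G : Type*} [Group G] (H : Subgroup G) [H.Normal]
    {Hhat : Type*} [Group Hhat]
    (π : Hhat →* ↥H)
    (ρ : G →* MulAut Hhat)
    (hlift : ∀ (g : G) (x : Hhat), (↑(π (ρ g x)) : G) = g * ↑(π x) * g⁻¹)
    (hconj : ∀ y : Hhat, ρ (↑(π y) : G) = MulAut.conj y)
    (hfix : ∀ (g : G) (a : Hhat), a ∈ π.ker → ρ g a = a)
    (s : G ⧸ H → G)
    (t : G ⧸ H → G ⧸ H → Hhat)
    (ht : ∀ k k' : G ⧸ H, (↑(π (t k k')) : G) = (s (k * k'))⁻¹ * s k * s k')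
    (e : G ⧸ H → G ⧸ H → G ⧸ H → Hhat)
    (he : ∀ k1 k2 k3 : G ⧸ H,
      e k1 k2 k3
        = t k1 (k2 * k3) * t k2 k3 *
            (t (k1 * k2) k3 * ρ (s k3)⁻¹ (t k1 k2))⁻¹) :
    (∀ k1 k2 k3 : G ⧸ H, e k1 k2 k3 ∈ π.ker) ∧
    (∀ k1 k2 k3 k4 : G ⧸ H,
      e k2 k3 k4 * e k1 (k2 * k3) k4 * e k1 k2 k3
        = e (k1 * k2) k3 k4 * e k1 k2 (k3 * k4)) := by
  obtain rfl : e = liftObstruction ρ s t := funext₃ he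
  have hker : (H.subtype.comp π).ker = π.ker :=
    MonoidHom.ker_comp_of_injective π H.subtype H.subtype_injective
  rw [← hker] at hfix ⊢
  exact ⟨map_liftObstruction (φ := H.subtype.comp π) hlift ht,
    liftObstruction_cocycle (φ := H.subtype.comp π) hlift hconj hfix ht⟩

/-- For a gerbal pair `(G, Ĥ)` (a central extension `π : Ĥ → H` of a normal subgroup
`H ⊴ G` together with a lift `ρ̃` of the conjugation action of `G`, restricting to
conjugation on `H` and fixing `A = ker π` pointwise), any choice of set-theoretic section
`s` of `G → K = G/H` and of lifts `t̃(k,k')` of `t(k,k') = s(kk')⁻¹ s(k) s(k')` yields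
`e(k1,k2,k3) := t̃(k1,k2k3) t̃(k2,k3) (t̃(k1k2,k3) ρ̃_{s(k3)⁻¹}(t̃(k1,k2)))⁻¹`
with values in `A`, satisfying the 3-cocycle identity. -/
theorem gerbal_pair_three_cocycle
    {G : Type*} [Group G] (H : Subgroup G) [H.Normal]
    {Hhat : Type*} [Group Hhat]
    (π : Hhat →* ↥H) (hπsurj : Function.Surjective π)
    (hcentral : π.ker ≤ Subgroup.center Hhat)
    (ρ : G →* MulAut Hhat)
    (hlift : ∀ (g : G) (x : Hhat), (↑(π (ρ g x)) : G) = g * ↑(π x) * g⁻¹)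
    (hconj : ∀ y : Hhat, ρ (↑(π y) : G) = MulAut.conj y)
    (hfix : ∀ (g : G) (a : Hhat), a ∈ π.ker → ρ g a = a)
    (s : G ⧸ H → G)
    (hs : ∀ k : G ⧸ H, (QuotientGroup.mk (s k) : G ⧸ H) = k)
    (hs1 : s 1 = 1)
    (t : G ⧸ H → G ⧸ H → Hhat)
    (ht : ∀ k k' : G ⧸ H, (↑(π (t k k')) : G) = (s (k * k'))⁻¹ * s k * s k')
    (e : G ⧸ H → G ⧸ H → G ⧸ H → Hhat)
    (he : ∀ k1 k2 k3 : G ⧸ H,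
      e k1 k2 k3
        = t k1 (k2 * k3) * t k2 k3 *
            (t (k1 * k2) k3 * ρ (s k3)⁻¹ (t k1 k2))⁻¹) :
    (∀ k1 k2 k3 : G ⧸ H, e k1 k2 k3 ∈ π.ker) ∧
    (∀ k1 k2 k3 k4 : G ⧸ H,
      e k2 k3 k4 * e k1 (k2 * k3) k4 * e k1 k2 k3
        = e (k1 * k2) k3 k4 * e k1 k2 (k3 * k4)) :=
  gerbal_pair_three_cocycle_general H π ρ hlift hconj hfix s t ht e he
end

section
/- Let G be a group, H a normal subgroup of G, and π : Ĥ → H a surjective group homomorphism whose kernel A := ker π is contained in the center of Ĥ. Suppose ρ̃ and ρ̃' are two actions of G on Ĥ by group automorphisms, each satisfying: π(ρ̃_g(x)) = g · π(x) · g⁻¹ for all g, x; ρ̃_h = c_h for all h ∈ H (conjugation by any lift); and ρ̃_g(a) = a for all a ∈ A (and likewise for ρ̃'). Then: (a) for each g ∈ G and x ∈ Ĥ, the element ρ̃'_g(x) · ρ̃_g(x)⁻¹ lies in A and depends only on π(x), and the resulting map ū(g) : H → A, ū(g)(π(x)) := ρ̃'_g(x) · ρ̃_g(x)⁻¹, is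 a group homomorphism; (b) ū(gh) = ū(g) for all g ∈ G and h ∈ H, so ū descends to a function on K := G/H; (c) ū(gg')(h) = ū(g)(g' h g'⁻¹) · ū(g')(h) for all g,g' ∈ G and h ∈ H (i.e. ū is a 1-cocycle with values in Hom(H,A)). -/
/-!
Both liftings cover the same action on `H`, so `ū(g)(x) = ρ̃'_g(x) ρ̃_g(x)⁻¹` lies in the central
subgroup `A`. Since both liftings fix `A` pointwise, `ū(g)(x)` only depends on `π(x)`, and centrality
makes `ū(g)` multiplicative, hence invariant under conjugation; as `ρ̃_{g π(y)} = ρ̃_g ∘ c_y`, this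
is the right `H`-invariance. For the cocycle identity write `ρ̃_{g'}(x) = ū(g')(x)⁻¹ ρ̃'_{g'}(x)`
and use that `ρ̃_g` fixes `ū(g')(x) ∈ A`.
-/

def discrepancy {M N : Type*} [Group N] (f f' : M → N) (x : M) : N := f' x * (f x)⁻¹

section Discrepancy

variable {M N F : Type*} [Group N]

theorem discrepancy_mem_ker {P : Type*} [Group P] (π : N →* P) {f f' : M → N} {x : M}
    (h : π (f' x) = π (f x)) : discrepancy f f' x ∈ π.ker := by
  rw [discrepancy, MonoidHom.mem_ker, map_mul, map_inv, h, mul_inv_cancel]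

theorem discrepancy_mul [Monoid M] [FunLike F M N] [MonoidHomClass F M N] {φ φ' : F}
    (hc : ∀ x, discrepancy φ φ' x ∈ Subgroup.center N) (x y : M) :
    discrepancy φ φ' (x * y) = discrepancy φ φ' x * discrepancy φ φ' y := by
  have hy := Subgroup.mem_center_iff.mp (hc y) (φ x)⁻¹
  calc discrepancy φ φ' (x * y) = φ' x * (discrepancy φ φ' y * (φ x)⁻¹) := by
        simp only [discrepancy, map_mul, mul_inv_rev, mul_assoc]
    _ = discrepancy φ φ' x * discrepancy φ φ' y := by
        rw [← hy]; simp only [discrepancy, mul_assoc]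

theorem discrepancy_conj [Group M] [FunLike F M N] [MonoidHomClass F M N] {φ φ' : F}
    (hc : ∀ x, discrepancy φ φ' x ∈ Subgroup.center N) (x y : M) :
    discrepancy φ φ' (y * x * y⁻¹) = discrepancy φ φ' x := by
  have hinv : discrepancy φ φ' y * discrepancy φ φ' y⁻¹ = 1 := by
    rw [← discrepancy_mul hc, mul_inv_cancel]; simp [discrepancy]
  rw [discrepancy_mul hc, discrepancy_mul hc, Subgroup.mem_center_iff.mp (hc x), mul_assoc, hinv,
    mul_one]

end Discrepancy

section Endomorphism

variable {M F : Type*} [Group M] [FunLike F M M] [MonoidHomClass F M M]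

theorem discrepancy_eq_of_map_eq {P : Type*} [Group P] (π : M →* P) {φ φ' : F}
    (hφ : ∀ a ∈ π.ker, φ a = a) (hφ' : ∀ a ∈ π.ker, φ' a = a) {x x' : M} (h : π x = π x') :
    discrepancy φ φ' x = discrepancy φ φ' x' := by
  have ha : x'⁻¹ * x ∈ π.ker := (π.eq_iff).mp h
  calc discrepancy φ φ' x = discrepancy φ φ' (x' * (x'⁻¹ * x)) := by rw [mul_inv_cancel_left]
    _ = discrepancy φ φ' x' := by
        simp only [discrepancy, map_mul, hφ _ ha, hφ' _ ha]; group

theorem discrepancy_comp (φ ψ φ' ψ' : F) (x : M)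
    (h : φ (discrepancy ψ ψ' x) = discrepancy ψ ψ' x) :
    discrepancy (φ ∘ ψ) (φ' ∘ ψ') x = discrepancy φ φ' (ψ' x) * discrepancy ψ ψ' x := by
  have hψ : ψ x = (discrepancy ψ ψ' x)⁻¹ * ψ' x := by simp [discrepancy]
  have hφψ : φ (ψ x) = (discrepancy ψ ψ' x)⁻¹ * φ (ψ' x) := by rw [hψ, map_mul, map_inv, h]
  simp only [discrepancy, Function.comp_apply] at hφψ ⊢
  rw [hφψ]; group

end Endomorphism

theorem gerbal_pair_liftings_torsor_one_cocycle_general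
    {G : Type*} [Group G] (H : Subgroup G)
    {Hhat : Type*} [Group Hhat]
    (π : Hhat →* ↥H)
    (hcentral : π.ker ≤ Subgroup.center Hhat)
    (ρ ρ' : G →* MulAut Hhat)
    (hlift : ∀ (g : G) (x : Hhat), (↑(π (ρ g x)) : G) = g * ↑(π x) * g⁻¹)
    (hconj : ∀ y : Hhat, ρ (↑(π y) : G) = MulAut.conj y)
    (hfix : ∀ (g : G) (a : Hhat), a ∈ π.ker → ρ g a = a)
    (hlift' : ∀ (g : G) (x : Hhat), (↑(π (ρ' g x)) : G) = g * ↑(π x) * g⁻¹)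
    (hconj' : ∀ y : Hhat, ρ' (↑(π y) : G) = MulAut.conj y)
    (hfix' : ∀ (g : G) (a : Hhat), a ∈ π.ker → ρ' g a = a)
    (u : G → Hhat → Hhat)
    (hu : ∀ (g : G) (x : Hhat), u g x = ρ' g x * (ρ g x)⁻¹) :
    -- (a) values in A, well-defined on H, and a homomorphism in the H-variable
    (∀ (g : G) (x : Hhat), u g x ∈ π.ker) ∧
    (∀ (g : G) (x x' : Hhat), π x = π x' → u g x = u g x') ∧
    (∀ (g : G) (x x' : Hhat), u g (x * x') = u g x * u g x') ∧
    -- (b) invariance under right translation by elements of H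
    (∀ (g : G) (y : Hhat) (x : Hhat), u (g * (↑(π y) : G)) x = u g x) ∧
    -- (c) the 1-cocycle identity
    (∀ (g g' : G) (x z : Hhat),
      (↑(π z) : G) = g' * (↑(π x) : G) * g'⁻¹ →
        u (g * g') x = u g z * u g' x) := by
  obtain rfl : u = fun g => discrepancy (ρ g) (ρ' g) := funext₂ hu
  have hker (g : G) (x : Hhat) : discrepancy (ρ g) (ρ' g) x ∈ π.ker :=
    discrepancy_mem_ker π (Subtype.ext (by rw [hlift, hlift']))
  have hcenter (g : G) (x : Hhat) : discrepancy (ρ g) (ρ' g) x ∈ Subgroup.center Hhat :=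
    hcentral (hker g x)
  have hwd (g : G) {x x' : Hhat} (h : π x = π x') :
      discrepancy (ρ g) (ρ' g) x = discrepancy (ρ g) (ρ' g) x' :=
    discrepancy_eq_of_map_eq π (hfix g) (hfix' g) h
  refine ⟨hker, fun g x x' h => hwd g h, fun g => discrepancy_mul (hcenter g),
    fun g y x => ?_, fun g g' x z hz => ?_⟩
  · calc discrepancy (ρ (g * π y)) (ρ' (g * π y)) x
        = discrepancy (ρ g) (ρ' g) (y * x * y⁻¹) := by
          simp only [discrepancy, map_mul, MulAut.mul_apply, hconj, hconj', MulAut.conj_apply]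
      _ = discrepancy (ρ g) (ρ' g) x := discrepancy_conj (hcenter g) x y
  · have hz' : π (ρ' g' x) = π z := Subtype.ext (by rw [hlift', hz])
    calc discrepancy (ρ (g * g')) (ρ' (g * g')) x
        = discrepancy (ρ g) (ρ' g) (ρ' g' x) * discrepancy (ρ g') (ρ' g') x := by
          rw [map_mul, map_mul, MulAut.coe_mul, MulAut.coe_mul]
          exact discrepancy_comp (ρ g) (ρ g') (ρ' g) (ρ' g') x (hfix g _ (hker g' x))
      _ = discrepancy (ρ g) (ρ' g) z * discrepancy (ρ g') (ρ' g') x := by rw [hwd g hz']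

/-- Two gerbal-pair liftings `ρ̃`, `ρ̃'` of the conjugation action of `G` on a normal
subgroup `H` to a central extension `π : Ĥ → H` differ by a 1-cocycle
`ū : K → Hom(H, A)`, where `K = G/H` and `A = ker π`. -/
theorem gerbal_pair_liftings_torsor_one_cocycle
    {G : Type*} [Group G] (H : Subgroup G) [H.Normal]
    {Hhat : Type*} [Group Hhat]
    (π : Hhat →* ↥H) (hπsurj : Function.Surjective π)
    (hcentral : π.ker ≤ Subgroup.center Hhat)
    (ρ ρ' : G →* MulAut Hhat)
    (hlift : ∀ (g : G) (x : Hhat), (↑(π (ρ g x)) : G) = g * ↑(π x) * g⁻¹)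
    (hconj : ∀ y : Hhat, ρ (↑(π y) : G) = MulAut.conj y)
    (hfix : ∀ (g : G) (a : Hhat), a ∈ π.ker → ρ g a = a)
    (hlift' : ∀ (g : G) (x : Hhat), (↑(π (ρ' g x)) : G) = g * ↑(π x) * g⁻¹)
    (hconj' : ∀ y : Hhat, ρ' (↑(π y) : G) = MulAut.conj y)
    (hfix' : ∀ (g : G) (a : Hhat), a ∈ π.ker → ρ' g a = a)
    (u : G → Hhat → Hhat)
    (hu : ∀ (g : G) (x : Hhat), u g x = ρ' g x * (ρ g x)⁻¹) :
    -- (a) values in A, well-defined on H, and a homomorphism in the H-variable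
    (∀ (g : G) (x : Hhat), u g x ∈ π.ker) ∧
    (∀ (g : G) (x x' : Hhat), π x = π x' → u g x = u g x') ∧
    (∀ (g : G) (x x' : Hhat), u g (x * x') = u g x * u g x') ∧
    -- (b) invariance under right translation by elements of H
    (∀ (g : G) (y : Hhat) (x : Hhat), u (g * (↑(π y) : G)) x = u g x) ∧
    -- (c) the 1-cocycle identity
    (∀ (g g' : G) (x z : Hhat),
      (↑(π z) : G) = g' * (↑(π x) : G) * g'⁻¹ →
        u (g * g') x = u g z * u g' x) :=
  gerbal_pair_liftings_torsor_one_cocycle_general H π hcentral ρ ρ' hlift hconj hfix hlift' hconj'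
    hfix' u hu
end

section
/- Let R be an associative unital ℂ-algebra (possibly noncommutative). For every g ∈ GL_∞(R) and every integer M, there exists an integer N such that tᴺR[[t]] ⊆ g(tᴹR[[t]]) and the quotient g(tᴹR[[t]])/tᴺR[[t]] is a finitely generated projective right R-module. -/
/-!
Let `L = g(tᴹR[[t]])`. Continuity of `g⁻¹` gives `tᴺR[[t]] ⊆ L` for some `N`. Since `tᴹR[[t]]` is
spanned modulo `tⁿR[[t]]` by finitely many monomials, continuity of `g` gives `L ⊆ tᴾR[[t]]` for
some `P`. Conjugating the truncation projection of `R((t))` onto `tᴹR[[t]]` by `g` gives a right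
`R`-linear projection of `R((t))` onto `L`, so `L/tᴺR[[t]]` is a direct summand of
`tᴾR[[t]]/tᴺR[[t]] ≅ R^{[P, N)}`, which is free of finite rank.
-/

set_option synthInstance.maxHeartbeats 1000000
set_option maxHeartbeats 2000000

noncomputable section

variable (R : Type) [Ring R]

/-- We fix once and for all the additive structure on `R((t))` used below (this avoids
typeclass-unification issues between the two definitionally equal `AddCommMonoid`
structures on `HahnSeries ℤ R` present in Mathlib). -/
instance (priority := 10000) hahnACM : AddCommMonoid (HahnSeries ℤ R) :=
  AddCommGroup.toAddCommMonoid

instance (priority := 10000) hahnModOp : Module Rᵐᵒᵖ (HahnSeries ℤ R) :=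
  HahnSeries.instModule

/-- `tⁿ·R[[t]]`: the right `R`-submodule of `R((t))` of series supported in degrees
`≥ n`. -/
def lattR (n : ℤ) : Submodule Rᵐᵒᵖ (HahnSeries ℤ R) where
  carrier := {f | ∀ i : ℤ, i < n → f.coeff i = 0}
  add_mem' := by
    intro a b ha hb i hi
    have h : (a + b).coeff i = a.coeff i + b.coeff i := rfl
    rw [h, ha i hi, hb i hi, add_zero]
  zero_mem' := by
    intro i _
    rfl
  smul_mem' := by
    intro c a ha i hi
    have h : (c • a).coeff i = c • a.coeff i := rfl
    rw [h, ha i hi, smul_zero]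

/-- `gl_∞(R)`: the ring of continuous right `R`-module endomorphisms of `R((t))`
(continuity for the t-adic topology: for every `m` there is `n` with
`f(tⁿR[[t]]) ⊆ tᵐR[[t]]`). -/
def glInfR : Subring (Module.End Rᵐᵒᵖ (HahnSeries ℤ R)) where
  carrier := {f | ∀ m : ℤ, ∃ n : ℤ, ∀ v ∈ lattR R n, f v ∈ lattR R m}
  mul_mem' := by
    intro f g hf hg m
    obtain ⟨n, hn⟩ := hf m
    obtain ⟨p, hp⟩ := hg n
    exact ⟨p, fun v hv => hn _ (hp v hv)⟩
  one_mem' := fun m => ⟨m, fun v hv => hv⟩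
  add_mem' := by
    intro f g hf hg m
    obtain ⟨n1, h1⟩ := hf m
    obtain ⟨n2, h2⟩ := hg m
    refine ⟨max n1 n2, fun v hv => ?_⟩
    have hv1 : v ∈ lattR R n1 := fun i hi => hv i (lt_of_lt_of_le hi (le_max_left _ _))
    have hv2 : v ∈ lattR R n2 := fun i hi => hv i (lt_of_lt_of_le hi (le_max_right _ _))
    exact (lattR R m).add_mem (h1 v hv1) (h2 v hv2)
  zero_mem' := fun m => ⟨m, fun v _ => (lattR R m).zero_mem⟩
  neg_mem' := by
    intro f hf m
    obtain ⟨n, hn⟩ := hf m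
    refine ⟨n, fun v hv => ?_⟩
    rw [LinearMap.neg_apply]
    exact (lattR R m).neg_mem (hn v hv)

/-- `GL_∞(R)`, the group of units of `gl_∞(R)`. -/
abbrev GLInfR := (↥(glInfR R))ˣ

theorem Submodule.finite_and_projective_quotient_of_retract {S M F : Type*} [Ring S]
    [AddCommGroup M] [Module S M] [AddCommGroup F] [Module S F] [Module.Finite S F]
    [Module.Projective S F] {K : Submodule S M} (w : M →ₗ[S] F) (c : F →ₗ[S] M)
    (hw : K ≤ LinearMap.ker w) (hcw : ∀ x, c (w x) - x ∈ K) :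
    Module.Finite S (M ⧸ K) ∧ Module.Projective S (M ⧸ K) := by
  have hsplit : (K.mkQ ∘ₗ c) ∘ₗ K.liftQ w hw = LinearMap.id := by
    ext x
    simpa [Submodule.Quotient.eq] using hcw x
  exact ⟨.of_surjective (K.mkQ ∘ₗ c)
    (Function.RightInverse.surjective (LinearMap.congr_fun hsplit)), .of_split _ _ hsplit⟩

theorem LinearMap.IsProj.conj {S M M₂ : Type*} [Semiring S] [AddCommMonoid M] [Module S M]
    [AddCommMonoid M₂] [Module S M₂] {m : Submodule S M} {f : M →ₗ[S] M} (hf : IsProj m f)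
    (e : M ≃ₗ[S] M₂) :
    IsProj (m.map (e : M →ₗ[S] M₂)) ((e : M →ₗ[S] M₂) ∘ₗ f ∘ₗ (e.symm : M₂ →ₗ[S] M)) where
  map_mem _ := Submodule.mem_map_of_mem (hf.map_mem _)
  map_id := by
    rintro _ ⟨y, hy, rfl⟩
    simp [hf.map_id y hy]

section LaurentLattices

open MulOpposite HahnSeries

variable {R}

theorem lattR_antitone : Antitone (lattR R) :=
  fun _ _ h _ hv i hi => hv i (hi.trans_le h)

theorem exists_mem_lattR (f : HahnSeries ℤ R) : ∃ P, f ∈ lattR R P :=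
  ⟨f.order, fun _ hi => coeff_eq_zero_of_lt_order hi⟩

theorem Submodule.FG.exists_le_lattR {L : Submodule Rᵐᵒᵖ (HahnSeries ℤ R)} (hL : L.FG) :
    ∃ P, L ≤ lattR R P := by
  obtain ⟨s, rfl⟩ := hL
  choose P hP using exists_mem_lattR (R := R)
  obtain ⟨Q, hQ⟩ := Finite.exists_ge fun x : s => P x
  exact ⟨Q, Submodule.span_le.2 fun x hx => lattR_antitone (hQ ⟨x, hx⟩) (hP x)⟩

theorem isProj_one_sub_truncLT (M : ℤ) :
    LinearMap.IsProj (lattR R M)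
      (1 - truncLTLinearMap Rᵐᵒᵖ M : Module.End Rᵐᵒᵖ (HahnSeries ℤ R)) where
  map_mem f i hi := by simp [HahnSeries.coeff_truncLT, hi]
  map_id f hf := by
    ext i
    simp only [LinearMap.sub_apply, Module.End.one_apply, coe_truncLTLinearMap, coeff_sub,
      HahnSeries.coeff_truncLT]
    split_ifs with hi
    · simp [hf i hi]
    · simp

def coeffWindow (P N : ℤ) : HahnSeries ℤ R →ₗ[Rᵐᵒᵖ] (Set.Ico P N → Rᵐᵒᵖ) where
  toFun f i := op (f.coeff i)
  map_add' _ _ := rfl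
  map_smul' _ _ := rfl

def windowSeries (P N : ℤ) : (Set.Ico P N → Rᵐᵒᵖ) →ₗ[Rᵐᵒᵖ] HahnSeries ℤ R where
  toFun v := ofSuppBddBelow (fun j => if h : j ∈ Set.Ico P N then unop (v ⟨j, h⟩) else 0)
    ⟨P, fun j hj => by_contra fun hPj => hj (dif_neg fun h => hPj h.1)⟩
  map_add' v w := by
    ext j
    change (if h : j ∈ Set.Ico P N then unop ((v + w) ⟨j, h⟩) else 0)
      = (if h : j ∈ Set.Ico P N then unop (v ⟨j, h⟩) else 0)
        + (if h : j ∈ Set.Ico P N then unop (w ⟨j, h⟩) else 0)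
    split_ifs <;> simp
  map_smul' c v := by
    ext j
    simp [smul_eq_mul_unop]

theorem coeffWindow_eq_zero_of_mem_lattR {P N : ℤ} {f : HahnSeries ℤ R} (hf : f ∈ lattR R N) :
    coeffWindow P N f = 0 :=
  funext fun i => by simp [coeffWindow, hf i i.2.2]

theorem sub_windowSeries_coeffWindow_mem_lattR {P N : ℤ} {f : HahnSeries ℤ R}
    (hf : f ∈ lattR R P) : f - windowSeries P N (coeffWindow P N f) ∈ lattR R N := by
  intro j hj
  by_cases hPj : P ≤ j
  · simp [windowSeries, coeffWindow, hPj, hj]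
  · simp [windowSeries, hPj, hf j (not_le.1 hPj)]

theorem exists_map_lattR_le_lattR {G : Module.End Rᵐᵒᵖ (HahnSeries ℤ R)} (hG : G ∈ glInfR R)
    (M : ℤ) : ∃ P, (lattR R M).map G ≤ lattR R P := by
  obtain ⟨n, hn⟩ := hG 0
  obtain ⟨Q, hQ⟩ := (Module.Finite.fg_top.map (G ∘ₗ windowSeries M n)).exists_le_lattR
  refine ⟨min Q 0, ?_⟩
  rintro _ ⟨f, hf, rfl⟩
  rw [← add_sub_cancel (windowSeries M n (coeffWindow M n f)) f, map_add]
  exact add_mem (lattR_antitone (min_le_left _ _) (hQ ⟨_, trivial, rfl⟩))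
    (lattR_antitone (min_le_right _ _) (hn _ (sub_windowSeries_coeffWindow_mem_lattR hf)))

theorem finite_and_projective_quotient_lattR_of_isProj {L : Submodule Rᵐᵒᵖ (HahnSeries ℤ R)}
    {p : Module.End Rᵐᵒᵖ (HahnSeries ℤ R)} (hp : LinearMap.IsProj L p) {P N : ℤ}
    (hLP : L ≤ lattR R P) (hNL : lattR R N ≤ L) :
    Module.Finite Rᵐᵒᵖ (L ⧸ (lattR R N).comap L.subtype) ∧
      Module.Projective Rᵐᵒᵖ (L ⧸ (lattR R N).comap L.subtype) := by
  refine Submodule.finite_and_projective_quotient_of_retract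
    (coeffWindow P N ∘ₗ L.subtype) (hp.codRestrict ∘ₗ windowSeries P N)
    (fun x hx => coeffWindow_eq_zero_of_mem_lattR hx) fun x => ?_
  have hx := sub_windowSeries_coeffWindow_mem_lattR (N := N) (hLP x.2)
  show p (windowSeries P N (coeffWindow P N x)) - x ∈ lattR R N
  have hpx : p (windowSeries P N (coeffWindow P N x)) - x
      = -p (x - windowSeries P N (coeffWindow P N (x : HahnSeries ℤ R))) := by
    rw [map_sub, hp.map_id x x.2, neg_sub]
  rw [hpx, hp.map_id _ (hNL hx)]
  exact neg_mem hx

end LaurentLattices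

theorem exists_lattice_in_image_with_fg_projective_quotient_general
    (R : Type) [Ring R] (g : GLInfR R) (M : ℤ) :
    ∃ N : ℤ,
      lattR R N ≤ (lattR R M).map
        ((g : ↥(glInfR R)) : Module.End Rᵐᵒᵖ (HahnSeries ℤ R)) ∧
      Module.Finite Rᵐᵒᵖ
        (↥((lattR R M).map ((g : ↥(glInfR R)) : Module.End Rᵐᵒᵖ (HahnSeries ℤ R))) ⧸
          ((lattR R N).comap
            ((lattR R M).map
              ((g : ↥(glInfR R)) : Module.End Rᵐᵒᵖ (HahnSeries ℤ R))).subtype)) ∧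
      Module.Projective Rᵐᵒᵖ
        (↥((lattR R M).map ((g : ↥(glInfR R)) : Module.End Rᵐᵒᵖ (HahnSeries ℤ R))) ⧸
          ((lattR R N).comap
            ((lattR R M).map
              ((g : ↥(glInfR R)) : Module.End Rᵐᵒᵖ (HahnSeries ℤ R))).subtype)) := by
  let e := LinearMap.GeneralLinearGroup.toLinearEquiv
    (Units.map (glInfR R).subtype.toMonoidHom g)
  obtain ⟨P, hLP⟩ := exists_map_lattR_le_lattR (g : ↥(glInfR R)).2 M
  obtain ⟨N, hN⟩ := (g⁻¹ : GLInfR R).1.2 M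
  have hNL : lattR R N ≤ (lattR R M).map (e : Module.End Rᵐᵒᵖ (HahnSeries ℤ R)) :=
    fun v hv => ⟨e.symm v, hN v hv, e.apply_symm_apply v⟩
  exact ⟨N, hNL,
    finite_and_projective_quotient_lattR_of_isProj ((isProj_one_sub_truncLT M).conj e) hLP hNL⟩

/-- For every `g ∈ GL_∞(R)` and every `M ∈ ℤ` there is `N ∈ ℤ` with
`tᴺR[[t]] ⊆ g(tᴹR[[t]])`, such that the quotient `g(tᴹR[[t]])/tᴺR[[t]]` is a finitely
generated projective right `R`-module. -/
theorem exists_lattice_in_image_with_fg_projective_quotient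
    (R : Type) [Ring R] [Algebra ℂ R] (g : GLInfR R) (M : ℤ) :
    ∃ N : ℤ,
      lattR R N ≤ (lattR R M).map
        ((g : ↥(glInfR R)) : Module.End Rᵐᵒᵖ (HahnSeries ℤ R)) ∧
      Module.Finite Rᵐᵒᵖ
        (↥((lattR R M).map ((g : ↥(glInfR R)) : Module.End Rᵐᵒᵖ (HahnSeries ℤ R))) ⧸
          ((lattR R N).comap
            ((lattR R M).map
              ((g : ↥(glInfR R)) : Module.End Rᵐᵒᵖ (HahnSeries ℤ R))).subtype)) ∧
      Module.Projective Rᵐᵒᵖ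
        (↥((lattR R M).map ((g : ↥(glInfR R)) : Module.End Rᵐᵒᵖ (HahnSeries ℤ R))) ⧸
          ((lattR R N).comap
            ((lattR R M).map
              ((g : ↥(glInfR R)) : Module.End Rᵐᵒᵖ (HahnSeries ℤ R))).subtype)) :=
  exists_lattice_in_image_with_fg_projective_quotient_general R g M

end
end
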